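/- For every n ≥ 1, every normal natural deduction proof of φ_n in M→ has size (number of formula occurrences in the derivation tree) at least 2^n; consequently the minimal size of normal proofs of the formulas φ_n grows at least exponentially in n. -/

import Mathlib

/-!
A normal proof of `ξ_n → C` must produce `C` by eliminating `ξ_n = A_n → ξ_{n-1}` all the way
down, hence contains proofs of `A_n, …, A_1`. In a normal derivation the only way to prove
`A_m = ((D_m → ξ_{m-1}) → D_m) → D_m` is to assume `(D_m → ξ_{m-1}) → D_m` and apply it to a
proof of `D_m → ξ_{m-1}`, i.e. to prove `ξ_{m-1}` under the extra assumption `D_m`. That proof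
again has to eliminate `ξ_n`, and besides `A_{m-1}, …, A_1` only `D_m` (which makes `A_m`
trivial) is available, so it contains fresh proofs of `A_n, …, A_{m+1}`. The cost of proving `A_m` therefore at least doubles as `m`
decreases.
-/

/-- Formulas of purely implicational logic, built from atoms (numbered by `ℕ`)
by the single connective `→` (`impl`). -/
inductive Fm : Type
  | atom : ℕ → Fm
  | impl : Fm → Fm → Fm
deriving DecidableEq

/-- χ[X,Y] = (((X → Y) → X) → X) → Y. -/
def chi (X Y : Fm) : Fm := (((X.impl Y).impl X).impl X).impl Y

/-- The atom `Fm.atom 0` is C, and `Fm.atom k` is D_k for k ≥ 1.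
ξ₁ = χ[D₁, C] and ξ_{i+1} = χ[D_{i+1}, ξ_i]  (the value at 0 is irrelevant). -/
def xi : ℕ → Fm
  | 0 => chi (.atom 1) (.atom 0)
  | 1 => chi (.atom 1) (.atom 0)
  | n + 2 => chi (.atom (n + 2)) (xi (n + 1))

/-- φ_n = ξ_n → C. -/
def phi (n : ℕ) : Fm := (xi n).impl (.atom 0)

/-- Natural deduction derivations for M→, indexed by the multiset of open
assumption occurrences and the conclusion.  `assume a` is a one-occurrence
assumption of `a`; `intro n` is →-introduction discharging exactly `n`
occurrences of the assumption `a`; `elim` is →-elimination whose second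
premise (the implication) is the major premise. -/
inductive Deriv : Multiset Fm → Fm → Type
  | assume (a : Fm) : Deriv {a} a
  | intro {Γ : Multiset Fm} {a b : Fm} (n : ℕ)
      (d : Deriv (Γ + Multiset.replicate n a) b) : Deriv Γ (a.impl b)
  | elim {Γ Δ : Multiset Fm} {a b : Fm}
      (minor : Deriv Γ a) (major : Deriv Δ (a.impl b)) : Deriv (Γ + Δ) b

/-- The last rule of the derivation is an →-introduction. -/
def Deriv.isIntro : ∀ {Γ b}, Deriv Γ b → Prop
  | _, _, .intro _ _ => True
  | _, _, _ => False

/-- A derivation is normal if no formula occurrence is both the conclusion of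
an →-introduction and the major premise of an →-elimination. -/
def Deriv.normal : ∀ {Γ b}, Deriv Γ b → Prop
  | _, _, .assume _ => True
  | _, _, .intro _ d => d.normal
  | _, _, .elim minor major => minor.normal ∧ major.normal ∧ ¬ major.isIntro

/-- Size of a derivation: the number of formula occurrences in the tree. -/
def Deriv.size : ∀ {Γ b}, Deriv Γ b → ℕ
  | _, _, .assume _ => 1
  | _, _, .intro _ d => Deriv.size d + 1
  | _, _, .elim minor major => Deriv.size minor + Deriv.size major + 1

namespace Fm

def IsTail (c : Fm) : Fm → Prop
  | .atom i => c = .atom i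
  | .impl a b => c = a.impl b ∨ c.IsTail b

theorem IsTail.refl : ∀ c : Fm, c.IsTail c
  | .atom _ => rfl
  | .impl _ _ => Or.inl rfl

theorem IsTail.of_impl {a c : Fm} : ∀ {g : Fm}, (a.impl c).IsTail g → c.IsTail g
  | .atom _, h => nomatch h
  | .impl _ _, .inl h => by rw [← h]; exact .inr (.refl c)
  | .impl _ _, .inr h => .inr h.of_impl

end Fm

namespace Deriv

theorem one_le_size {Γ : Multiset Fm} {c : Fm} (d : Deriv Γ c) : 1 ≤ d.size := by
  cases d <;> simp [size]

theorem exists_isTail {Γ : Multiset Fm} {c : Fm} (d : Deriv Γ c) (hd : d.normal)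
    (hi : ¬ d.isIntro) : ∃ g ∈ Γ, c.IsTail g := by
  induction d with
  | assume a => exact ⟨a, Multiset.mem_singleton_self a, .refl a⟩
  | intro => exact absurd trivial hi
  | elim _ major _ ih =>
    obtain ⟨g, hg, hc⟩ := ih hd.2.1 hd.2.2
    exact ⟨g, Multiset.mem_add.2 (.inr hg), hc.of_impl⟩

theorem exists_of_not_isTail {Γ : Multiset Fm} {a b : Fm} (d : Deriv Γ (a.impl b))
    (hd : d.normal) (hΓ : ∀ g ∈ Γ, ¬ (a.impl b).IsTail g) :
    ∃ k, ∃ e : Deriv (Γ + Multiset.replicate k a) b, e.normal ∧ e.size + 1 = d.size := by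
  cases d with
  | intro k e => exact ⟨k, e, hd, rfl⟩
  | _ =>
    obtain ⟨g, hg, hc⟩ := exists_isTail _ hd (by simp [isIntro])
    exact absurd hc (hΓ g hg)

end Deriv

namespace Xi

/- Indices are shifted so that no side condition `1 ≤ k` is needed: `xi' k` is `ξ_k` with
`ξ_0 = C`, and `ξ_{k+1} = A_k → ξ_k` where `A_k = B_k → D_{k+1}`, `B_k = F_k → D_{k+1}` and
`F_k = D_{k+1} → ξ_k` are the subformulas of `χ[D_{k+1}, ξ_k]`. -/
def xi' : ℕ → Fm
  | 0 => .atom 0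
  | k + 1 => chi (.atom (k + 1)) (xi' k)

def F (k : ℕ) : Fm := (Fm.atom (k + 1)).impl (xi' k)

def B (k : ℕ) : Fm := (F k).impl (.atom (k + 1))

def A (k : ℕ) : Fm := (B k).impl (.atom (k + 1))

theorem xi'_succ (k : ℕ) : xi' (k + 1) = (A k).impl (xi' k) := rfl

theorem xi_eq_xi' {n : ℕ} (hn : 1 ≤ n) : xi n = xi' n := by
  induction n, hn using Nat.le_induction with
  | base => rfl
  | succ m hm ih =>
    obtain ⟨m, rfl⟩ := Nat.exists_eq_add_of_le' hm
    rw [xi, ih]; rfl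

@[simp]
theorem xi'_ne_atom_succ (j k : ℕ) : xi' j ≠ .atom (k + 1) := by
  cases j <;> simp [xi', chi]

@[simp]
theorem atom_succ_ne_xi' (j k : ℕ) : .atom (k + 1) ≠ xi' j := (xi'_ne_atom_succ j k).symm

@[simp]
theorem impl_eq_xi'_iff {a b : Fm} {j : ℕ} :
    a.impl b = xi' j ↔ ∃ i, j = i + 1 ∧ a = A i ∧ b = xi' i := by
  cases j with
  | zero => simp [xi']
  | succ j => simp [xi'_succ]

theorem xi'_injective : Function.Injective xi' := by
  intro i j h
  induction i generalizing j with
  | zero => cases j <;> simp_all [xi', chi]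
  | succ i ih =>
    obtain ⟨j, rfl, -, h⟩ := impl_eq_xi'_iff.1 h
    rw [ih h]

@[simp]
theorem isTail_xi'_iff {c : Fm} {n : ℕ} : c.IsTail (xi' n) ↔ ∃ j ≤ n, c = xi' j := by
  induction n with
  | zero => simp [xi', Fm.IsTail]
  | succ n ih =>
    rw [xi'_succ, Fm.IsTail, ih]
    constructor
    · rintro (h | ⟨j, hj, rfl⟩)
      exacts [⟨n + 1, le_rfl, h⟩, ⟨j, by omega, rfl⟩]
    · rintro ⟨j, hj, rfl⟩
      rcases Nat.lt_or_ge j (n + 1) with hj' | hj'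
      exacts [.inr ⟨j, by omega, rfl⟩, .inl (by rw [le_antisymm hj hj', xi'_succ])]

/-- The open assumptions that can occur in a normal proof of `ξ_n → C` once the `A_k`, and
the `D_{k+1}`, with `k < t` have been discharged. -/
inductive Admissible (n t : ℕ) : Fm → Prop
  | of_xi' : Admissible n t (xi' n)
  | of_A {k : ℕ} : k < t → Admissible n t (A k)
  | of_B (k : ℕ) : Admissible n t (B k)
  | of_D {k : ℕ} : k < t → Admissible n t (.atom (k + 1))

theorem Admissible.mono {n t t' : ℕ} (h : t ≤ t') {g : Fm} :
    Admissible n t g → Admissible n t' g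
  | .of_xi' => .of_xi'
  | .of_A hk => .of_A (by omega)
  | .of_B k => .of_B k
  | .of_D hk => .of_D (by omega)

theorem Admissible.eq_of_xi' {n t j : ℕ} {g : Fm} (hg : Admissible n t g) (h : g = xi' j) :
    j = n := by
  cases hg with
  | of_xi' => exact (xi'_injective h).symm
  | _ => cases j <;> simp_all [xi', chi, A, B, F]

theorem Admissible.lt_of_atom {n t k : ℕ} (hg : Admissible n t (.atom (k + 1))) : k < t := by
  generalize hD : Fm.atom (k + 1) = D at hg
  cases hg <;> simp_all [A, B, F]

theorem Admissible.not_isTail_A {n t k : ℕ} (hk : t ≤ k) {g : Fm} (hg : Admissible n t g) :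
    ¬ (A k).IsTail g := by
  cases hg <;> simp [Fm.IsTail, A, B, F]; omega

theorem Admissible.not_isTail_F {n t k : ℕ} {g : Fm} (hg : Admissible n t g) :
    ¬ (F k).IsTail g := by
  cases hg <;> simp [Fm.IsTail, A, B, F]

theorem Admissible.eq_F_of_isTail {n t k : ℕ} (hk : t ≤ k) {g a : Fm} (hg : Admissible n t g)
    (h : (a.impl (.atom (k + 1))).IsTail g) : a = F k := by
  cases hg <;> simp_all [Fm.IsTail, A, B, F]; omega

theorem Admissible.eq_A_of_isTail {n t j : ℕ} {g a : Fm} (hg : Admissible n t g)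
    (h : (a.impl (xi' j)).IsTail g) : a = A j := by
  cases hg <;> simp_all [Fm.IsTail, xi'_injective.eq_iff, A, B, F]

section Inversion

variable {n t : ℕ} {Γ : Multiset Fm}

theorem exists_deriv_atom_of_A {k : ℕ} (hk : t ≤ k) (d : Deriv Γ (A k)) (hd : d.normal)
    (hΓ : ∀ g ∈ Γ, Admissible n t g) :
    ∃ (Δ : Multiset Fm) (e : Deriv Δ (.atom (k + 1))),
      e.normal ∧ (∀ g ∈ Δ, Admissible n t g) ∧ e.size + 1 ≤ d.size := by
  obtain ⟨m, e, he, hsize⟩ :=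
    d.exists_of_not_isTail hd fun g hg => (hΓ g hg).not_isTail_A hk
  refine ⟨_, e, he, fun g hg => ?_, hsize.le⟩
  rcases Multiset.mem_add.1 hg with hg | hg
  · exact hΓ g hg
  · rw [Multiset.eq_of_mem_replicate hg]; exact .of_B k

theorem exists_deriv_F_of_atom {k : ℕ} (hk : t ≤ k) (d : Deriv Γ (.atom (k + 1)))
    (hd : d.normal) (hΓ : ∀ g ∈ Γ, Admissible n t g) :
    ∃ (Δ : Multiset Fm) (e : Deriv Δ (F k)),
      e.normal ∧ (∀ g ∈ Δ, Admissible n t g) ∧ e.size + 2 ≤ d.size := by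
  cases d with
  | assume =>
    have := (hΓ _ (Multiset.mem_singleton_self _)).lt_of_atom
    omega
  | elim minor major =>
    obtain ⟨g, hg, htail⟩ := major.exists_isTail hd.2.1 hd.2.2
    obtain rfl := (hΓ g (Multiset.mem_add.2 (.inr hg))).eq_F_of_isTail hk htail
    refine ⟨_, minor, hd.1, fun g hg => hΓ g (Multiset.mem_add.2 (.inl hg)), ?_⟩
    have := major.one_le_size
    simp only [Deriv.size]
    omega

theorem exists_deriv_xi'_of_F {k : ℕ} (hk : t ≤ k) (d : Deriv Γ (F k)) (hd : d.normal)
    (hΓ : ∀ g ∈ Γ, Admissible n t g) :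
    ∃ (Δ : Multiset Fm) (e : Deriv Δ (xi' k)),
      e.normal ∧ (∀ g ∈ Δ, Admissible n (k + 1) g) ∧ e.size + 1 ≤ d.size := by
  obtain ⟨m, e, he, hsize⟩ :=
    d.exists_of_not_isTail hd fun g hg => (hΓ g hg).not_isTail_F
  refine ⟨_, e, he, fun g hg => ?_, hsize.le⟩
  rcases Multiset.mem_add.1 hg with hg | hg
  · exact (hΓ g hg).mono (by omega)
  · rw [Multiset.eq_of_mem_replicate hg]; exact .of_D (Nat.lt_succ_self k)

theorem exists_deriv_xi'_of_A {k : ℕ} {c : Fm} (hk : t ≤ k) (d : Deriv Γ c) (hd : d.normal)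
    (hΓ : ∀ g ∈ Γ, Admissible n t g) (hc : c = A k) :
    ∃ (Δ : Multiset Fm) (e : Deriv Δ (xi' k)),
      e.normal ∧ (∀ g ∈ Δ, Admissible n (k + 1) g) ∧ e.size + 4 ≤ d.size := by
  subst hc
  obtain ⟨_, e₁, he₁, hΓ₁, hsize₁⟩ := exists_deriv_atom_of_A hk d hd hΓ
  obtain ⟨_, e₂, he₂, hΓ₂, hsize₂⟩ := exists_deriv_F_of_atom hk e₁ he₁ hΓ₁
  obtain ⟨_, e₃, he₃, hΓ₃, hsize₃⟩ := exists_deriv_xi'_of_F hk e₂ he₂ hΓ₂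
  exact ⟨_, e₃, he₃, hΓ₃, by omega⟩

end Inversion

/- Eliminating `ξ_n` down to `ξ_j` requires proofs of `A_{n-1}, …, A_j`, and a proof of an
`A_k` that is not yet available contains a proof of `ξ_k` from the same kind of context, so
the cost doubles with each of the `n - max j t` steps. -/
theorem two_pow_le_size {n t j : ℕ} {Γ : Multiset Fm} {c : Fm} :
    (d : Deriv Γ c) → d.normal → (∀ g ∈ Γ, Admissible n t g) → c = xi' j →
      2 ^ (n - max j t) ≤ d.size
  | .assume _, _, hΓ, hc => by
    obtain rfl := (hΓ _ (Multiset.mem_singleton_self _)).eq_of_xi' hc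
    simp [Deriv.size]
  | @Deriv.intro _ a _ m e, hd, hΓ, hc => by
    obtain ⟨i, rfl, ha, hb⟩ := impl_eq_xi'_iff.1 hc
    have hΔ : ∀ g ∈ Γ + Multiset.replicate m a, Admissible n (max t (i + 1)) g := by
      intro g hg
      rcases Multiset.mem_add.1 hg with hg | hg
      · exact (hΓ g hg).mono (le_max_left _ _)
      · rw [Multiset.eq_of_mem_replicate hg, ha]; exact .of_A (by omega)
    have := two_pow_le_size e hd hΔ hb
    rw [max_eq_right (by omega : i ≤ max t (i + 1)), max_comm] at this
    simp only [Deriv.size]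
    omega
  | .elim minor major, hd, hΓ, hc => by
    have hΓ₁ := fun g hg => hΓ g (Multiset.mem_add.2 (.inl hg))
    have hΓ₂ := fun g hg => hΓ g (Multiset.mem_add.2 (.inr hg))
    obtain ⟨g, hg, htail⟩ := major.exists_isTail hd.2.1 hd.2.2
    have ha := (hΓ₂ g hg).eq_A_of_isTail (hc ▸ htail)
    have hmajor := two_pow_le_size (j := j + 1) major hd.2.1 hΓ₂ (by rw [ha, hc]; rfl)
    simp only [Deriv.size]
    rcases Nat.lt_or_ge j t with hjt | hjt
    · rw [max_eq_right hjt.le]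
      rw [max_eq_right (by omega : j + 1 ≤ t)] at hmajor
      omega
    · obtain ⟨Δ, e, he, hΔ, hsize⟩ := exists_deriv_xi'_of_A hjt minor hd.1 hΓ₁ ha
      have he := two_pow_le_size e he hΔ rfl
      have hpow : 2 ^ (n - j) ≤ 2 * 2 ^ (n - (j + 1)) := by
        rw [← pow_succ']; exact Nat.pow_le_pow_right two_pos (by omega)
      rw [max_eq_left hjt]
      rw [max_eq_right (by omega : j ≤ j + 1)] at he
      rw [max_eq_left (by omega : t ≤ j + 1)] at hmajor
      omega
termination_by d => d.size
decreasing_by all_goals (simp only [Deriv.size]; omega)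

end Xi

open Xi in
/-- every normal proof of φ_n (n ≥ 1) has size at least 2^n;
hence the minimal size of normal proofs of the φ_n grows at least
exponentially in n. -/
theorem lower_bound_size (n : ℕ) (hn : 1 ≤ n)
    (d : Deriv (0 : Multiset Fm) (phi n)) (hd : d.normal) :
    2 ^ n ≤ d.size := by
  obtain ⟨m, e, he, hsize⟩ := d.exists_of_not_isTail hd (by simp)
  have hΓ : ∀ g ∈ (0 : Multiset Fm) + Multiset.replicate m (xi n), Admissible n 0 g := by
    intro g hg
    rw [zero_add] at hg
    rw [Multiset.eq_of_mem_replicate hg, xi_eq_xi' hn]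
    exact .of_xi'
  have he := two_pow_le_size (j := 0) e he hΓ rfl
  rw [max_self, Nat.sub_zero] at he
  exact he.trans (hsize ▸ Nat.le_succ _)
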